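/- arXiv:2506.15329 — 4 statements merged into one kernel-verified Lean document; each statement's English description precedes it below -/
import Mathlib

section
/- Let g ~ N(0,1) and h ~ χ²_{d−1} be independent, and let ε > 0, σ > 0. Then E[Q((1 + ε g)/(σ √((1 + ε g)² + ε² h)))] ≤ Q((1 − 10 d ε²)/σ) + e^{−d} + e^{−1/(8ε²)}. -/
open MeasureTheory ProbabilityTheory

/-- Standard Gaussian `N(0, I_k)` on `ℝ^k`. -/
noncomputable def stdGaussianPi (k : ℕ) : Measure (Fin k → ℝ) :=
  Measure.pi fun _ => gaussianReal 0 1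

/-- Chi-squared distribution with `k` degrees of freedom, as the law of
`‖g‖²` for `g ~ N(0, I_k)`. -/
noncomputable def chiSq (k : ℕ) : Measure ℝ :=
  Measure.map (fun g : Fin k → ℝ => ∑ i, g i ^ 2) (stdGaussianPi k)

/-- Gaussian tail function `Q(t) = P(Z > t)`, `Z ~ N(0,1)`. -/
noncomputable def Qfun (t : ℝ) : ℝ := (gaussianReal 0 1 (Set.Ioi t)).toReal

section Helpers

open Real
open scoped NNReal ENNReal

lemma gaussPDF_eq (x : ℝ) :
    gaussianPDFReal 0 1 x = (Real.sqrt (2 * π))⁻¹ * Real.exp (-x ^ 2 / 2) := by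
  unfold gaussianPDFReal
  norm_num

lemma integral_gaussianReal_density (f : ℝ → ℝ) :
    ∫ x, f x ∂(gaussianReal 0 1) = ∫ x, gaussianPDFReal 0 1 x * f x := by
  rw [gaussianReal_of_var_ne_zero 0 one_ne_zero]
  have h : gaussianPDF 0 1 = fun x => ((Real.toNNReal (gaussianPDFReal 0 1 x) : ℝ≥0) : ℝ≥0∞) := by
    ext x
    simp [gaussianPDF, ENNReal.ofReal]
  rw [h, integral_withDensity_eq_integral_smul ((measurable_gaussianPDFReal 0 1).real_toNNReal)]
  congr 1
  ext x
  simp [NNReal.smul_def, Real.coe_toNNReal _ (gaussianPDFReal_nonneg 0 1 x)]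

lemma integrable_gaussianReal_iff (f : ℝ → ℝ) :
    Integrable f (gaussianReal 0 1) ↔
      Integrable (fun x => gaussianPDFReal 0 1 x * f x) volume := by
  rw [gaussianReal_of_var_ne_zero 0 one_ne_zero]
  have h : gaussianPDF 0 1 = fun x => ((Real.toNNReal (gaussianPDFReal 0 1 x) : ℝ≥0) : ℝ≥0∞) := by
    ext x
    simp [gaussianPDF, ENNReal.ofReal]
  rw [h, integrable_withDensity_iff_integrable_smul ((measurable_gaussianPDFReal 0 1).real_toNNReal)]
  constructor <;> intro hi <;> refine hi.congr (Filter.Eventually.of_forall fun x => ?_) <;>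
    simp [NNReal.smul_def, Real.coe_toNNReal _ (gaussianPDFReal_nonneg 0 1 x)]

lemma pdf_mul_exp_sq (x : ℝ) :
    gaussianPDFReal 0 1 x * Real.exp (3/10 * x ^ 2)
      = (Real.sqrt (2 * π))⁻¹ * Real.exp (-(1/5 : ℝ) * x ^ 2) := by
  rw [gaussPDF_eq, mul_assoc, ← Real.exp_add]
  congr 1
  ring_nf

lemma integral_exp_sq_gauss :
    ∫ x, Real.exp (3/10 * x ^ 2) ∂(gaussianReal 0 1) = Real.sqrt (5/2) := by
  rw [integral_gaussianReal_density]
  simp_rw [pdf_mul_exp_sq]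
  rw [integral_const_mul, integral_gaussian]
  rw [← Real.sqrt_inv, ← Real.sqrt_mul (by positivity)]
  congr 1
  have hπ : π ≠ 0 := pi_ne_zero
  field_simp

lemma integrable_exp_sq_gauss :
    Integrable (fun x => Real.exp (3/10 * x ^ 2)) (gaussianReal 0 1) := by
  rw [integrable_gaussianReal_iff]
  simp_rw [pdf_mul_exp_sq]
  exact (integrable_exp_neg_mul_sq (by norm_num : (0:ℝ) < 1/5)).const_mul _

lemma pdf_mul_exp_lin (t x : ℝ) :
    gaussianPDFReal 0 1 x * Real.exp (-t * x)
      = ((Real.sqrt (2 * π))⁻¹ * Real.exp (t ^ 2 / 2)) * Real.exp (-(1/2 : ℝ) * (x + t) ^ 2) := by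
  rw [gaussPDF_eq, mul_assoc, ← Real.exp_add,
    show -x ^ 2 / 2 + -t * x = t ^ 2 / 2 + -(1/2 : ℝ) * (x + t) ^ 2 by ring,
    Real.exp_add, ← mul_assoc]

lemma integral_exp_lin_gauss (t : ℝ) :
    ∫ x, Real.exp (-t * x) ∂(gaussianReal 0 1) = Real.exp (t ^ 2 / 2) := by
  rw [integral_gaussianReal_density]
  simp_rw [pdf_mul_exp_lin]
  rw [integral_const_mul,
    integral_add_right_eq_self (fun y => Real.exp (-(1/2 : ℝ) * y ^ 2)) t,
    integral_gaussian]
  rw [show π / (1/2 : ℝ) = 2 * π by ring]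
  have h : Real.sqrt (2*π) ≠ 0 := by positivity
  field_simp

lemma integrable_exp_lin_gauss (t : ℝ) :
    Integrable (fun x => Real.exp (-t * x)) (gaussianReal 0 1) := by
  rw [integrable_gaussianReal_iff]
  simp_rw [pdf_mul_exp_lin]
  exact ((integrable_exp_neg_mul_sq (by norm_num : (0:ℝ) < 1/2)).comp_add_right t).const_mul _

lemma markov_toReal {α : Type*} [MeasurableSpace α] (μ : Measure α) {f : α → ℝ}
    (hf : Measurable f) {s : Set α} {c B : ℝ} (hc : 0 < c) (hB : 0 ≤ B)
    (hs : ∀ x ∈ s, c ≤ f x)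
    (hint : ∫⁻ x, ENNReal.ofReal (f x) ∂μ ≤ ENNReal.ofReal B) :
    (μ s).toReal ≤ B / c := by
  have h1 : μ s ≤ μ {x | ENNReal.ofReal c ≤ ENNReal.ofReal (f x)} :=
    measure_mono fun x hx => ENNReal.ofReal_le_ofReal (hs x hx)
  have h2 := mul_meas_ge_le_lintegral₀ (μ := μ) hf.ennreal_ofReal.aemeasurable
    (ENNReal.ofReal c)
  have h3 : ENNReal.ofReal c * μ s ≤ ENNReal.ofReal B :=
    le_trans (mul_le_mul_right h1 _) (h2.trans hint)
  have h4 : μ s ≤ ENNReal.ofReal B / ENNReal.ofReal c := by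
    rw [ENNReal.le_div_iff_mul_le (Or.inl (by simp [hc])) (Or.inl ENNReal.ofReal_ne_top)]
    rwa [mul_comm]
  rw [← ENNReal.ofReal_div_of_pos hc] at h4
  exact ENNReal.toReal_le_of_le_ofReal (by positivity) h4

lemma gaussian_tail (t : ℝ) (ht : 0 < t) :
    ((gaussianReal 0 1) (Set.Iio (-t))).toReal ≤ Real.exp (-t ^ 2 / 2) := by
  have hm : Measurable fun x : ℝ => Real.exp (-t * x) := by fun_prop
  have h := markov_toReal (gaussianReal 0 1) hm (s := Set.Iio (-t))
    (c := Real.exp (t ^ 2)) (B := Real.exp (t ^ 2 / 2)) (Real.exp_pos _) (Real.exp_pos _).le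
    (fun x hx => by
      rw [Real.exp_le_exp]
      have : x < -t := hx
      nlinarith)
    (by
      rw [← ofReal_integral_eq_lintegral_ofReal (integrable_exp_lin_gauss t)
        (ae_of_all _ fun x => (Real.exp_pos _).le), integral_exp_lin_gauss])
  calc ((gaussianReal 0 1) (Set.Iio (-t))).toReal
      ≤ Real.exp (t ^ 2 / 2) / Real.exp (t ^ 2) := h
    _ = Real.exp (-t ^ 2 / 2) := by rw [← Real.exp_sub]; ring_nf

instance isProb_stdGaussianPi (k : ℕ) : IsProbabilityMeasure (stdGaussianPi k) := by
  unfold stdGaussianPi; infer_instance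

lemma lintegral_exp_sq_pi (k : ℕ) (c : ℝ) :
    ∫⁻ g, ENNReal.ofReal (Real.exp (c * ∑ i, g i ^ 2)) ∂(stdGaussianPi k)
      = (∫⁻ x, ENNReal.ofReal (Real.exp (c * x ^ 2)) ∂(gaussianReal 0 1)) ^ k := by
  induction k with
  | zero => simp
  | succ n ih =>
      have hmp := MeasureTheory.measurePreserving_piFinSuccAbove
        (fun _ : Fin (n+1) => gaussianReal 0 1) 0
      set F : ℝ × (Fin n → ℝ) → ℝ≥0∞ := fun z =>
        ENNReal.ofReal (Real.exp (c * z.1 ^ 2)) *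
          ENNReal.ofReal (Real.exp (c * ∑ i, z.2 i ^ 2)) with hF
      have hFm : Measurable F := by fun_prop
      have hcomp := hmp.lintegral_comp hFm
      have hL : ∀ g : Fin (n+1) → ℝ,
          F (MeasurableEquiv.piFinSuccAbove (fun _ => ℝ) 0 g)
            = ENNReal.ofReal (Real.exp (c * ∑ i, g i ^ 2)) := by
        intro g
        have hsum : ∑ i, g i ^ 2 = g 0 ^ 2 + ∑ i : Fin n, g (Fin.succAbove 0 i) ^ 2 :=
          Fin.sum_univ_succAbove (fun i => g i ^ 2) 0
        simp only [hF, MeasurableEquiv.piFinSuccAbove_apply,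
          Fin.insertNthEquiv_symm_apply, Fin.removeNth]
        rw [← ENNReal.ofReal_mul (Real.exp_pos _).le, ← Real.exp_add, hsum]
        ring_nf
      rw [show (∫⁻ g, ENNReal.ofReal (Real.exp (c * ∑ i, g i ^ 2)) ∂(stdGaussianPi (n+1)))
          = ∫⁻ g, F (MeasurableEquiv.piFinSuccAbove (fun _ => ℝ) 0 g) ∂(stdGaussianPi (n+1)) by
        exact lintegral_congr fun g => (hL g).symm]
      rw [show stdGaussianPi (n+1) = Measure.pi (fun _ : Fin (n+1) => gaussianReal 0 1) from rfl,
        hcomp]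
      rw [show (Measure.pi fun j : Fin n => gaussianReal 0 1) = stdGaussianPi n from rfl] at *
      have m1 : Measurable fun x : ℝ => ENNReal.ofReal (Real.exp (c * x ^ 2)) :=
        (Real.measurable_exp.comp ((measurable_id.pow_const 2).const_mul c)).ennreal_ofReal
      have m2 : Measurable fun y : Fin n → ℝ => ENNReal.ofReal (Real.exp (c * ∑ i, y i ^ 2)) :=
        (Real.measurable_exp.comp ((Finset.measurable_sum Finset.univ
          fun i _ => (measurable_pi_apply i).pow_const 2).const_mul c)).ennreal_ofReal
      rw [hF, lintegral_prod_mul (f := fun x : ℝ => ENNReal.ofReal (Real.exp (c * x ^ 2)))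
        (g := fun y : Fin n → ℝ => ENNReal.ofReal (Real.exp (c * ∑ i, y i ^ 2)))
        m1.aemeasurable m2.aemeasurable, ih, pow_succ]
      ring

lemma measurable_sumsq (k : ℕ) : Measurable fun g : Fin k → ℝ => ∑ i, g i ^ 2 :=
  Finset.measurable_sum Finset.univ fun i _ => (measurable_pi_apply i).pow_const 2

lemma chiSq_tail (k : ℕ) (a : ℝ) :
    ((chiSq k) (Set.Ioi a)).toReal ≤ Real.exp (-(3/10) * a) * Real.sqrt (5/2) ^ k := by
  rw [chiSq, Measure.map_apply (measurable_sumsq k) measurableSet_Ioi]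
  have h := markov_toReal (stdGaussianPi k)
    (f := fun g : Fin k → ℝ => Real.exp (3/10 * ∑ i, g i ^ 2))
    (Real.measurable_exp.comp ((measurable_sumsq k).const_mul _))
    (s := (fun g : Fin k → ℝ => ∑ i, g i ^ 2) ⁻¹' Set.Ioi a)
    (c := Real.exp (3/10 * a)) (B := Real.sqrt (5/2) ^ k)
    (Real.exp_pos _) (by positivity)
    (fun g hg => by
      rw [Real.exp_le_exp]
      have : a < ∑ i, g i ^ 2 := hg
      nlinarith)
    (by
      rw [lintegral_exp_sq_pi,
        ← ofReal_integral_eq_lintegral_ofReal integrable_exp_sq_gauss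
          (ae_of_all _ fun x => (Real.exp_pos _).le),
        integral_exp_sq_gauss, ← ENNReal.ofReal_pow (Real.sqrt_nonneg _)])
  refine h.trans (le_of_eq ?_)
  rw [div_eq_mul_inv, ← Real.exp_neg, mul_comm]
  ring_nf

lemma chiSq_Iio_zero (k : ℕ) : chiSq k (Set.Iio 0) = 0 := by
  rw [chiSq, Measure.map_apply (measurable_sumsq k) measurableSet_Iio]
  convert measure_empty
  · ext g
    simp only [Set.mem_preimage, Set.mem_Iio, Set.mem_empty_iff_false, iff_false, not_lt]
    positivity
  · infer_instance

lemma Qfun_nonneg (t : ℝ) : 0 ≤ Qfun t := ENNReal.toReal_nonneg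

lemma Qfun_le_one (t : ℝ) : Qfun t ≤ 1 := by
  have h := prob_le_one (μ := gaussianReal 0 1) (s := Set.Ioi t)
  have := ENNReal.toReal_mono ENNReal.one_ne_top h
  simpa [Qfun] using this

lemma Qfun_anti {a b : ℝ} (h : a ≤ b) : Qfun b ≤ Qfun a :=
  ENNReal.toReal_mono (measure_ne_top _ _) (measure_mono (Set.Ioi_subset_Ioi h))

lemma key_ineq (c u v s : ℝ) (hc0 : 0 ≤ c) (hu2 : 1/2 ≤ u) (hv0 : 0 ≤ v)
    (hvle : v ≤ c/2) (hs0 : 0 < s) (hssq : s ^ 2 = u ^ 2 + v) : (1 - c) * s ≤ u := by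
  have hu0 : (0:ℝ) < u := by linarith
  have hw : 2 * u * s ≤ 2 * u ^ 2 + v := by
    nlinarith [sq_nonneg v, mul_pos (mul_pos two_pos hu0) hs0]
  rcases le_or_gt (1 - c) 0 with h1 | h1
  · nlinarith
  · have hcu : c * (1/4) ≤ c * u ^ 2 := mul_le_mul_of_nonneg_left (by nlinarith) hc0
    have hcv : 0 ≤ c * v := mul_nonneg hc0 hv0
    have h3 : (1 - c) * (2 * u ^ 2 + v) ≤ 2 * u ^ 2 := by nlinarith
    nlinarith [mul_le_mul_of_nonneg_left hw h1.le]

lemma key_alg (d : ℕ) (ε σ g h : ℝ) (hε : 0 < ε) (hσ : 0 < σ)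
    (hg : -(1/(2*ε)) ≤ g) (hh0 : 0 ≤ h) (hh : h ≤ 5 * d) :
    (1 - 10 * d * ε ^ 2) / σ ≤ (1 + ε * g) / (σ * Real.sqrt ((1 + ε * g) ^ 2 + ε ^ 2 * h)) := by
  have hu2 : (1:ℝ)/2 ≤ 1 + ε * g := by
    have h1 : ε * -(1/(2*ε)) ≤ ε * g := mul_le_mul_of_nonneg_left hg hε.le
    have h2 : ε * -(1/(2*ε)) = -(1/2) := by field_simp
    rw [h2] at h1; linarith
  have hv0 : (0:ℝ) ≤ ε ^ 2 * h := by positivity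
  have hvle : ε ^ 2 * h ≤ 10 * d * ε ^ 2 / 2 := by
    have := mul_le_mul_of_nonneg_left hh (sq_nonneg ε)
    nlinarith
  have hpos : (0:ℝ) < (1 + ε * g) ^ 2 + ε ^ 2 * h := by nlinarith
  have hs0 : 0 < Real.sqrt ((1 + ε * g) ^ 2 + ε ^ 2 * h) := Real.sqrt_pos.2 hpos
  have hssq : Real.sqrt ((1 + ε * g) ^ 2 + ε ^ 2 * h) ^ 2 = (1 + ε * g) ^ 2 + ε ^ 2 * h :=
    Real.sq_sqrt hpos.le
  have hkey := key_ineq (10 * d * ε ^ 2) (1 + ε * g) (ε ^ 2 * h) _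
    (by positivity) hu2 hv0 hvle hs0 hssq
  rw [div_le_div_iff₀ hσ (by positivity)]
  nlinarith [mul_le_mul_of_nonneg_left hkey hσ.le]

instance isProb_chiSq (k : ℕ) : IsProbabilityMeasure (chiSq k) := by
  rw [chiSq]; exact Measure.isProbabilityMeasure_map (measurable_sumsq k).aemeasurable


end Helpers

lemma chiSq_bad_bound (d : ℕ) (hd : 1 ≤ d) :
    ((chiSq (d-1)) (Set.Iio 0 ∪ Set.Ioi (5 * (d:ℝ)))).toReal ≤ Real.exp (-(d:ℝ)) := by
  have hle : chiSq (d-1) (Set.Iio 0 ∪ Set.Ioi (5 * (d:ℝ))) ≤ chiSq (d-1) (Set.Ioi (5 * (d:ℝ))) := by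
    refine le_trans (measure_union_le _ _) ?_
    rw [chiSq_Iio_zero, zero_add]
  refine le_trans (ENNReal.toReal_mono (measure_ne_top _ _) hle) ?_
  refine le_trans (chiSq_tail (d-1) (5 * d)) ?_
  have h1 : Real.sqrt (5/2) ≤ Real.exp (1/2) := by
    have h2 : (5/2 : ℝ) ≤ Real.exp (1/2) ^ 2 := by
      have h3 : Real.exp (1/2) ^ 2 = Real.exp ((2:ℕ) * (1/2)) := by
        rw [Real.exp_nat_mul]
      rw [h3]
      norm_num
      linarith [Real.exp_one_gt_d9]
    calc Real.sqrt (5/2) ≤ Real.sqrt (Real.exp (1/2) ^ 2) := Real.sqrt_le_sqrt h2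
      _ = Real.exp (1/2) := Real.sqrt_sq (Real.exp_pos _).le
  have hsq : Real.sqrt (5/2) ^ (d-1) ≤ Real.exp ((d:ℝ)/2) := by
    calc Real.sqrt (5/2) ^ (d-1) ≤ Real.exp (1/2) ^ (d-1) :=
          pow_le_pow_left₀ (Real.sqrt_nonneg _) h1 _
      _ = Real.exp (((d-1 : ℕ):ℝ) * (1/2)) := (Real.exp_nat_mul _ _).symm
      _ ≤ Real.exp ((d:ℝ)/2) := by
          rw [Real.exp_le_exp, Nat.cast_sub hd]
          push_cast
          linarith
  calc Real.exp (-(3/10) * (5*(d:ℝ))) * Real.sqrt (5/2) ^ (d-1)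
      ≤ Real.exp (-(3/10) * (5*(d:ℝ))) * Real.exp ((d:ℝ)/2) :=
        mul_le_mul_of_nonneg_left hsq (Real.exp_pos _).le
    _ = Real.exp (-(d:ℝ)) := by rw [← Real.exp_add]; congr 1; ring

/-- For independent `g ~ N(0,1)` and `h ~ χ²_{d−1}`, and `ε, σ > 0`:
`E[Q((1+εg)/(σ√((1+εg)²+ε²h)))] ≤ Q((1−10dε²)/σ) + e^{−d} + e^{−1/(8ε²)}`. -/
theorem stmt7 (d : ℕ) (hd : 1 ≤ d) (ε σ : ℝ) (hε : 0 < ε) (hσ : 0 < σ) :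
    (∫ g : ℝ, ∫ h : ℝ,
        Qfun ((1 + ε * g) / (σ * Real.sqrt ((1 + ε * g) ^ 2 + ε ^ 2 * h)))
          ∂(chiSq (d - 1)) ∂(gaussianReal 0 1))
      ≤ Qfun ((1 - 10 * (d : ℝ) * ε ^ 2) / σ)
        + Real.exp (-(d : ℝ)) + Real.exp (-1 / (8 * ε ^ 2)) := by
  set ν := chiSq (d-1) with hν
  set γ := gaussianReal 0 1 with hγ
  haveI : IsProbabilityMeasure ν := by rw [hν]; infer_instance
  haveI : IsProbabilityMeasure γ := by rw [hγ]; infer_instance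
  set t0 := (1 - 10 * (d:ℝ) * ε ^ 2) / σ with ht0
  set F : ℝ → ℝ → ℝ := fun g h =>
    Qfun ((1 + ε * g) / (σ * Real.sqrt ((1 + ε * g) ^ 2 + ε ^ 2 * h))) with hF
  set U : Set ℝ := Set.Iio 0 ∪ Set.Ioi (5 * (d:ℝ)) with hU
  have hUm : MeasurableSet U := measurableSet_Iio.union measurableSet_Ioi
  set S : Set ℝ := Set.Iio (-(1/(2*ε))) with hS
  have hSm : MeasurableSet S := measurableSet_Iio
  have hindU : Integrable (fun h : ℝ => U.indicator (1 : ℝ → ℝ) h) ν := by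
    exact (integrable_const (1:ℝ)).indicator hUm
  have hindS : Integrable (fun g : ℝ => S.indicator (1 : ℝ → ℝ) g) γ := by
    exact (integrable_const (1:ℝ)).indicator hSm
  have inner : ∀ g : ℝ, ∫ h, F g h ∂ν
      ≤ Qfun t0 + S.indicator 1 g + (ν U).toReal := by
    intro g
    have hmono : ∫ h, F g h ∂ν
        ≤ ∫ h, ((Qfun t0 + S.indicator 1 g) + U.indicator 1 h) ∂ν := by
      refine integral_mono_of_nonneg (ae_of_all _ fun h => Qfun_nonneg _)
        ((integrable_const _).add hindU) ?_
      refine ae_of_all _ fun h => ?_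
      show F g h ≤ (Qfun t0 + S.indicator 1 g) + U.indicator 1 h
      have hind0 : (0:ℝ) ≤ S.indicator 1 g := Set.indicator_nonneg (fun _ _ => by norm_num) g
      by_cases hh : h ∈ U
      · rw [Set.indicator_of_mem hh]
        have := Qfun_le_one ((1 + ε * g) / (σ * Real.sqrt ((1 + ε * g) ^ 2 + ε ^ 2 * h)))
        simp only [Pi.one_apply]
        linarith [Qfun_nonneg t0]
      · rw [Set.indicator_of_notMem hh]
        simp only [hU, Set.mem_union, Set.mem_Iio, Set.mem_Ioi, not_or, not_lt] at hh
        by_cases hgS : g ∈ S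
        · rw [Set.indicator_of_mem hgS]
          have := Qfun_le_one ((1 + ε * g) / (σ * Real.sqrt ((1 + ε * g) ^ 2 + ε ^ 2 * h)))
          simp only [Pi.one_apply]
          linarith [Qfun_nonneg t0]
        · rw [Set.indicator_of_notMem hgS]
          have hg : -(1/(2*ε)) ≤ g := not_lt.1 (by simpa [hS] using hgS)
          have hkey := key_alg d ε σ g h hε hσ hg hh.1 hh.2
          have := Qfun_anti hkey
          simp only [hF, ht0]
          linarith
    rw [integral_add (integrable_const _) hindU,
      integral_const, integral_indicator_one hUm] at hmono
    simpa [Measure.real] using hmono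
  have outer : ∫ g, (∫ h, F g h ∂ν) ∂γ
      ≤ ∫ g, (Qfun t0 + S.indicator 1 g + (ν U).toReal) ∂γ := by
    refine integral_mono_of_nonneg
      (ae_of_all _ fun g => integral_nonneg fun h => Qfun_nonneg _)
      ?_ (ae_of_all _ inner)
    exact ((integrable_const _).add hindS).add (integrable_const _)
  have hsplit : ∫ g, (Qfun t0 + S.indicator 1 g + (ν U).toReal) ∂γ
      = Qfun t0 + (γ S).toReal + (ν U).toReal := by
    have hCS : Integrable (fun g : ℝ => Qfun t0 + S.indicator (1:ℝ→ℝ) g) γ := by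
      exact (integrable_const _).add hindS
    rw [integral_add hCS (integrable_const _),
      integral_add (integrable_const _) hindS,
      integral_const, integral_const, integral_indicator_one hSm]
    simp [measure_univ, Measure.real]
  rw [hsplit] at outer
  have hgauss : (γ S).toReal ≤ Real.exp (-1/(8*ε^2)) := by
    have h := gaussian_tail (1/(2*ε)) (by positivity)
    refine le_trans (le_of_eq (by rw [hγ, hS])) (le_trans h (le_of_eq ?_))
    congr 1
    field_simp
    ring
  have hchi : (ν U).toReal ≤ Real.exp (-(d:ℝ)) := by
    rw [hν, hU]; exact chiSq_bad_bound d hd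
  calc (∫ g, (∫ h, F g h ∂ν) ∂γ) ≤ Qfun t0 + (γ S).toReal + (ν U).toReal := outer
    _ ≤ Qfun t0 + Real.exp (-(d:ℝ)) + Real.exp (-1/(8*ε^2)) := by linarith
end

section
/- Let X_{ℓ+1} = X_ℓ(I + a_ℓ X_ℓ^T X_ℓ), x_{ℓ+1} = (I + a_ℓ X_ℓ^T X_ℓ) x_ℓ, y_{ℓ+1} = (I + b_ℓ X_ℓ X_ℓ^T) y_ℓ, with X_1 = X, x_1 = x, y_1 = y. Then for each ℓ the quantity x_ℓ^T X_ℓ^T y_ℓ equals x^T p_ℓ(X^T X) X^T y for some real polynomial p_ℓ of degree at most (3^ℓ − 3)/2, whose coefficients are polynomial (hence smooth) functions of (a_1, b_1, ..., a_{ℓ−1}, b_{ℓ−1}). -/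
/-!
Put `M = XᵀX`. Every iterate is a polynomial in `M`: `X_ℓ = X f_ℓ(M)`, `x_ℓ = f_ℓ(M) x` and
`X_ℓᵀ y_ℓ = r_ℓ(M) Xᵀ y`, because `X_ℓᵀ X_ℓ = (f_ℓ² t)(M)` and
`Xᵀ (1 + b X Xᵀ) = (1 + b XᵀX) Xᵀ`. Hence `f_{ℓ+1} = f_ℓ (1 + a_ℓ f_ℓ² t)` and
`r_{ℓ+1} = r_ℓ (1 + a_ℓ f_ℓ² t) (1 + b_ℓ f_ℓ² t)`, which gives `2 deg f_ℓ + 1 ≤ 3^ℓ` and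
`deg r_ℓ + 1 ≤ 3^ℓ`; since `f_ℓ(M)` is symmetric, `x_ℓᵀ X_ℓᵀ y_ℓ = xᵀ (f_ℓ r_ℓ)(M) Xᵀ y`.
Running the recursion over the ring of polynomials in the step sizes makes the coefficients
polynomial in them.
-/

open Matrix Polynomial

section Polynomials

variable {R S : Type*} [CommRing R] [CommRing S]

noncomputable def stepPoly (c : R) (f : R[X]) : R[X] := 1 + C c * f ^ 2 * X

noncomputable def featurePoly (a : ℕ → R) : ℕ → R[X]
  | 0 => 1
  | ℓ + 1 => featurePoly a ℓ * stepPoly (a ℓ) (featurePoly a ℓ)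

noncomputable def labelPoly (a b : ℕ → R) : ℕ → R[X]
  | 0 => 1
  | ℓ + 1 =>
    labelPoly a b ℓ * stepPoly (a ℓ) (featurePoly a ℓ) * stepPoly (b ℓ) (featurePoly a ℓ)

theorem natDegree_stepPoly_le (c : R) (f : R[X]) :
    (stepPoly c f).natDegree ≤ 2 * f.natDegree + 1 := by
  unfold stepPoly
  compute_degree

theorem two_mul_natDegree_featurePoly_add_one_le (a : ℕ → R) (ℓ : ℕ) :
    2 * (featurePoly a ℓ).natDegree + 1 ≤ 3 ^ ℓ := by
  induction ℓ with
  | zero => simp [featurePoly]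
  | succ ℓ ih =>
    have := natDegree_mul_le (p := featurePoly a ℓ) (q := stepPoly (a ℓ) (featurePoly a ℓ))
    have := natDegree_stepPoly_le (a ℓ) (featurePoly a ℓ)
    rw [featurePoly, pow_succ]
    omega

theorem natDegree_labelPoly_add_one_le (a b : ℕ → R) (ℓ : ℕ) :
    (labelPoly a b ℓ).natDegree + 1 ≤ 3 ^ ℓ := by
  induction ℓ with
  | zero => simp [labelPoly]
  | succ ℓ ih =>
    have := natDegree_mul_le (p := labelPoly a b ℓ * stepPoly (a ℓ) (featurePoly a ℓ))
      (q := stepPoly (b ℓ) (featurePoly a ℓ))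
    have := natDegree_mul_le (p := labelPoly a b ℓ) (q := stepPoly (a ℓ) (featurePoly a ℓ))
    have := natDegree_stepPoly_le (a ℓ) (featurePoly a ℓ)
    have := natDegree_stepPoly_le (b ℓ) (featurePoly a ℓ)
    have := two_mul_natDegree_featurePoly_add_one_le a ℓ
    rw [labelPoly, pow_succ]
    omega

theorem natDegree_featurePoly_mul_labelPoly_le (a b : ℕ → R) (ℓ : ℕ) :
    (featurePoly a ℓ * labelPoly a b ℓ).natDegree ≤ (3 ^ (ℓ + 1) - 3) / 2 := by
  have := natDegree_mul_le (p := featurePoly a ℓ) (q := labelPoly a b ℓ)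
  have := two_mul_natDegree_featurePoly_add_one_le a ℓ
  have := natDegree_labelPoly_add_one_le a b ℓ
  rw [pow_succ]
  omega

theorem stepPoly_map (φ : R →+* S) (c : R) (f : R[X]) :
    (stepPoly c f).map φ = stepPoly (φ c) (f.map φ) := by
  simp [stepPoly]

theorem featurePoly_map (φ : R →+* S) (a : ℕ → R) (ℓ : ℕ) :
    (featurePoly a ℓ).map φ = featurePoly (fun i => φ (a i)) ℓ := by
  induction ℓ with
  | zero => simp [featurePoly]
  | succ ℓ ih => rw [featurePoly, featurePoly, Polynomial.map_mul, stepPoly_map, ih]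

theorem labelPoly_map (φ : R →+* S) (a b : ℕ → R) (ℓ : ℕ) :
    (labelPoly a b ℓ).map φ = labelPoly (fun i => φ (a i)) (fun i => φ (b i)) ℓ := by
  induction ℓ with
  | zero => simp [labelPoly]
  | succ ℓ ih =>
    rw [labelPoly, labelPoly, Polynomial.map_mul, Polynomial.map_mul, stepPoly_map, stepPoly_map,
      ih, featurePoly_map]

theorem featurePoly_congr {a a' : ℕ → R} {ℓ : ℕ} (h : ∀ i < ℓ, a i = a' i) :
    featurePoly a ℓ = featurePoly a' ℓ := by
  induction ℓ with
  | zero => rfl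
  | succ ℓ ih =>
    rw [featurePoly, featurePoly, ih fun i hi => h i (by omega), h ℓ (by omega)]

theorem labelPoly_congr {a a' b b' : ℕ → R} {ℓ : ℕ} (ha : ∀ i < ℓ, a i = a' i)
    (hb : ∀ i < ℓ, b i = b' i) : labelPoly a b ℓ = labelPoly a' b' ℓ := by
  induction ℓ with
  | zero => rfl
  | succ ℓ ih =>
    rw [labelPoly, labelPoly, ih (fun i hi => ha i (by omega)) (fun i hi => hb i (by omega)),
      featurePoly_congr fun i hi => ha i (by omega), ha ℓ (by omega), hb ℓ (by omega)]

end Polynomials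

section Matrices

variable {R m n : Type*} [CommRing R] [Fintype m] [DecidableEq m] [Fintype n]

theorem Matrix.transpose_aeval (M : Matrix m m R) (p : R[X]) : (aeval M p)ᵀ = aeval Mᵀ p := by
  induction p using Polynomial.induction_on' with
  | add p q hp hq => simp [hp, hq]
  | monomial k c => simp [aeval_monomial, Algebra.algebraMap_eq_smul_one]

theorem Matrix.transpose_aeval_transpose_mul_self (X : Matrix n m R) (p : R[X]) :
    (aeval (Xᵀ * X) p)ᵀ = aeval (Xᵀ * X) p := by
  rw [transpose_aeval, transpose_mul, transpose_transpose]

theorem Matrix.transpose_mul_one_add_smul_mul_transpose [DecidableEq n] (A : Matrix n m R)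
    (c : R) : Aᵀ * (1 + c • (A * Aᵀ)) = (1 + c • (Aᵀ * A)) * Aᵀ := by
  simp only [Matrix.mul_add, Matrix.add_mul, Matrix.mul_one, Matrix.one_mul, Matrix.mul_smul,
    Matrix.smul_mul, Matrix.mul_assoc]

theorem Matrix.transpose_mul_self_mul_aeval (X : Matrix n m R) (p : R[X]) :
    (X * aeval (Xᵀ * X) p)ᵀ * (X * aeval (Xᵀ * X) p) =
      aeval (Xᵀ * X) (p ^ 2 * Polynomial.X) := by
  have hcomm : Commute (Xᵀ * X) (aeval (Xᵀ * X) p) := by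
    simpa using (Commute.all Polynomial.X p).map (aeval (Xᵀ * X))
  rw [transpose_mul, transpose_aeval_transpose_mul_self, map_mul, map_pow, aeval_X, sq,
    Matrix.mul_assoc, ← Matrix.mul_assoc Xᵀ, hcomm.eq, Matrix.mul_assoc]

theorem Matrix.one_add_smul_eq_aeval_stepPoly (X : Matrix n m R) (c : R) (p : R[X]) :
    1 + c • ((X * aeval (Xᵀ * X) p)ᵀ * (X * aeval (Xᵀ * X) p)) =
      aeval (Xᵀ * X) (stepPoly c p) := by
  rw [transpose_mul_self_mul_aeval, stepPoly, mul_assoc, ← smul_eq_C_mul, map_add, map_one,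
    map_smul]

theorem Matrix.aeval_transpose_mul_self_mulVec_dotProduct (X : Matrix n m R) (p : R[X])
    (x w : m → R) : (aeval (Xᵀ * X) p *ᵥ x) ⬝ᵥ w = x ⬝ᵥ aeval (Xᵀ * X) p *ᵥ w := by
  rw [← transpose_aeval_transpose_mul_self X p, mulVec_transpose, ← dotProduct_mulVec,
    transpose_aeval_transpose_mul_self]

end Matrices

section Propagation

variable {R m n : Type*} [CommRing R] [Fintype m] [DecidableEq m] [Fintype n]
  {X : Matrix n m R} {a b : ℕ → R} {Xs : ℕ → Matrix n m R}

theorem features_eq_mul_aeval (h0 : Xs 0 = X)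
    (hrec : ∀ ℓ, Xs (ℓ + 1) = Xs ℓ * (1 + a ℓ • ((Xs ℓ)ᵀ * Xs ℓ))) (ℓ : ℕ) :
    Xs ℓ = X * aeval (Xᵀ * X) (featurePoly a ℓ) := by
  induction ℓ with
  | zero => simp [h0, featurePoly]
  | succ ℓ ih =>
    rw [hrec, ih, one_add_smul_eq_aeval_stepPoly, Matrix.mul_assoc, ← map_mul, featurePoly]

theorem inputs_eq_aeval_mulVec {x : m → R} {xs : ℕ → m → R} (hX0 : Xs 0 = X) (hx0 : xs 0 = x)
    (hXrec : ∀ ℓ, Xs (ℓ + 1) = Xs ℓ * (1 + a ℓ • ((Xs ℓ)ᵀ * Xs ℓ)))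
    (hxrec : ∀ ℓ, xs (ℓ + 1) = (1 + a ℓ • ((Xs ℓ)ᵀ * Xs ℓ)) *ᵥ xs ℓ) (ℓ : ℕ) :
    xs ℓ = aeval (Xᵀ * X) (featurePoly a ℓ) *ᵥ x := by
  induction ℓ with
  | zero => simp [hx0, featurePoly]
  | succ ℓ ih =>
    rw [hxrec, ih, features_eq_mul_aeval hX0 hXrec, one_add_smul_eq_aeval_stepPoly,
      mulVec_mulVec, ← map_mul, featurePoly, mul_comm]

theorem labels_eq_aeval_mulVec [DecidableEq n] {y : n → R} {ys : ℕ → n → R} (hX0 : Xs 0 = X)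
    (hy0 : ys 0 = y)
    (hXrec : ∀ ℓ, Xs (ℓ + 1) = Xs ℓ * (1 + a ℓ • ((Xs ℓ)ᵀ * Xs ℓ)))
    (hyrec : ∀ ℓ, ys (ℓ + 1) = (1 + b ℓ • (Xs ℓ * (Xs ℓ)ᵀ)) *ᵥ ys ℓ) (ℓ : ℕ) :
    (Xs ℓ)ᵀ *ᵥ ys ℓ = aeval (Xᵀ * X) (labelPoly a b ℓ) *ᵥ (Xᵀ *ᵥ y) := by
  induction ℓ with
  | zero => simp [hX0, hy0, labelPoly]
  | succ ℓ ih =>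
    -- `(Xs ℓ)ᵀ` is pushed through the label step, turning `X_ℓ X_ℓᵀ` into `X_ℓᵀ X_ℓ`
    rw [hXrec, hyrec, transpose_mul, ← mulVec_mulVec, mulVec_mulVec (M := (Xs ℓ)ᵀ),
      transpose_mul_one_add_smul_mul_transpose, ← mulVec_mulVec, ih,
      features_eq_mul_aeval hX0 hXrec, one_add_smul_eq_aeval_stepPoly,
      one_add_smul_eq_aeval_stepPoly, transpose_aeval_transpose_mul_self, mulVec_mulVec,
      mulVec_mulVec, ← map_mul, ← map_mul, labelPoly, mul_rotate (labelPoly a b ℓ)]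

end Propagation

/-- Joint feature-and-label propagation:
`X_{ℓ+1} = X_ℓ(I + a_ℓ X_ℓᵀX_ℓ)`, `x_{ℓ+1} = (I + a_ℓ X_ℓᵀX_ℓ) x_ℓ`,
`y_{ℓ+1} = (I + b_ℓ X_ℓX_ℓᵀ) y_ℓ`, starting from `X, x, y`.  After `k` steps
(so at layer `ℓ = k+1`), the scalar `x_ℓᵀ X_ℓᵀ y_ℓ` equals
`xᵀ p(XᵀX) Xᵀ y` for a polynomial `p` of degree at most `(3^{ℓ}−3)/2` whose
coefficients are polynomial (hence smooth) functions of `(a_0, b_0, …, a_{k−1}, b_{k−1})`,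
expressed here via multivariate polynomials `q j` over the parameters. -/
theorem stmt13 (n d k : ℕ) :
    ∃ q : ℕ → MvPolynomial (Fin k × Bool) ℝ,
      (∀ j : ℕ, (3 ^ (k + 1) - 3) / 2 < j → q j = 0) ∧
      ∀ (X : Matrix (Fin n) (Fin d) ℝ) (x : Fin d → ℝ) (y : Fin n → ℝ)
        (a b : ℕ → ℝ)
        (Xseq : ℕ → Matrix (Fin n) (Fin d) ℝ) (xseq : ℕ → Fin d → ℝ)
        (yseq : ℕ → Fin n → ℝ),
        Xseq 0 = X → xseq 0 = x → yseq 0 = y →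
        (∀ ℓ, Xseq (ℓ + 1)
          = Xseq ℓ * ((1 : Matrix (Fin d) (Fin d) ℝ) + a ℓ • ((Xseq ℓ)ᵀ * Xseq ℓ))) →
        (∀ ℓ, xseq (ℓ + 1)
          = ((1 : Matrix (Fin d) (Fin d) ℝ) + a ℓ • ((Xseq ℓ)ᵀ * Xseq ℓ)).mulVec (xseq ℓ)) →
        (∀ ℓ, yseq (ℓ + 1)
          = ((1 : Matrix (Fin n) (Fin n) ℝ) + b ℓ • (Xseq ℓ * (Xseq ℓ)ᵀ)).mulVec (yseq ℓ)) →
        xseq k ⬝ᵥ (Xseq k)ᵀ.mulVec (yseq k)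
          = x ⬝ᵥ (∑ j ∈ Finset.range ((3 ^ (k + 1) - 3) / 2 + 1),
              (MvPolynomial.eval
                (fun i : Fin k × Bool => if i.2 then a (i.1 : ℕ) else b (i.1 : ℕ)) (q j))
                • ((Xᵀ * X) ^ j)).mulVec (Xᵀ.mulVec y) := by
  -- the step sizes `a ℓ`, `b ℓ` as indeterminates; `0` past step `k` is harmless since
  -- `featurePoly` and `labelPoly` at `k` only read the first `k` entries
  let var (s : Bool) (ℓ : ℕ) : MvPolynomial (Fin k × Bool) ℝ :=
    if h : ℓ < k then .X (⟨ℓ, h⟩, s) else 0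
  let P := featurePoly (var true) k * labelPoly (var true) (var false) k
  have hP : P.natDegree < (3 ^ (k + 1) - 3) / 2 + 1 :=
    Nat.lt_succ_of_le (natDegree_featurePoly_mul_labelPoly_le _ _ k)
  refine ⟨P.coeff, fun j hj => coeff_eq_zero_of_natDegree_lt (by omega), ?_⟩
  intro X x y a b Xs xs ys hX0 hx0 hy0 hXrec hxrec hyrec
  set v : Fin k × Bool → ℝ := fun i => if i.2 then a i.1 else b i.1
  have ha : ∀ i < k, MvPolynomial.eval v (var true i) = a i := fun i hi => by simp [var, v, hi]
  have hb : ∀ i < k, MvPolynomial.eval v (var false i) = b i := fun i hi => by simp [var, v, hi]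
  have hmap : P.map (MvPolynomial.eval v) = featurePoly a k * labelPoly a b k := by
    rw [Polynomial.map_mul, featurePoly_map, labelPoly_map, featurePoly_congr ha,
      labelPoly_congr ha hb]
  have hsum : ∑ j ∈ Finset.range ((3 ^ (k + 1) - 3) / 2 + 1),
      MvPolynomial.eval v (P.coeff j) • (Xᵀ * X) ^ j =
        aeval (Xᵀ * X) (P.map (MvPolynomial.eval v)) := by
    rw [aeval_eq_sum_range' ((natDegree_map_le).trans_lt hP)]
    simp only [coeff_map]
  rw [hsum, hmap, inputs_eq_aeval_mulVec hX0 hx0 hXrec hxrec,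
    labels_eq_aeval_mulVec hX0 hy0 hXrec hyrec, aeval_transpose_mul_self_mulVec_dotProduct,
    mulVec_mulVec, ← map_mul]
end

section
/- Let A = μμ^T + Δ where μ ∈ S^{d-1}, ‖Δ‖ ≤ 1/12 (operator norm), and let v ∈ R^d with μ^T v > 1/2 and ‖v‖ ≤ 3, and Av ≠ 0. Then |μ^T A v / ‖A v‖ − 1| ≤ 4 ‖Δ‖ ‖v‖ / (μ^T v − ‖Δ‖‖v‖), and in particular μ^T A v / ‖A v‖ ≥ 1 − 12 ‖Δ‖. -/
open RealInnerProductSpace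

/-- Perturbation bound: for `A = μμᵀ + Δ` with `‖μ‖ = 1`, `‖Δ‖ ≤ 1/12`
(operator norm), and `v` with `μᵀv > 1/2`, `‖v‖ ≤ 3`, `Av ≠ 0`:
`|μᵀAv/‖Av‖ − 1| ≤ 4‖Δ‖‖v‖/(μᵀv − ‖Δ‖‖v‖)`, and in particular
`μᵀAv/‖Av‖ ≥ 1 − 12‖Δ‖`. -/
theorem stmt17 (d : ℕ) (μ v : EuclideanSpace ℝ (Fin d))
    (A Δ : EuclideanSpace ℝ (Fin d) →L[ℝ] EuclideanSpace ℝ (Fin d))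
    (hA : ∀ w, A w = ⟪μ, w⟫ • μ + Δ w)
    (hμ : ‖μ‖ = 1) (hΔ : ‖Δ‖ ≤ 1 / 12)
    (hv1 : 1 / 2 < ⟪μ, v⟫) (hv2 : ‖v‖ ≤ 3) (hAv : A v ≠ 0) :
    |⟪μ, A v⟫ / ‖A v‖ - 1| ≤ 4 * ‖Δ‖ * ‖v‖ / (⟪μ, v⟫ - ‖Δ‖ * ‖v‖) ∧
    1 - 12 * ‖Δ‖ ≤ ⟪μ, A v⟫ / ‖A v‖ := by
  set t : ℝ := ⟪μ, v⟫ with ht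
  have hΔ0 : (0:ℝ) ≤ ‖Δ‖ := norm_nonneg _
  have hv0 : (0:ℝ) ≤ ‖v‖ := norm_nonneg _
  have hΔv : ‖Δ v‖ ≤ ‖Δ‖ * ‖v‖ := Δ.le_opNorm v
  have hδ3 : ‖Δ‖ * ‖v‖ ≤ 3 * ‖Δ‖ := by nlinarith
  have hδ4 : ‖Δ‖ * ‖v‖ ≤ 1/4 := by nlinarith
  -- inner product expansion
  have hinner : ⟪μ, A v⟫ = t + ⟪μ, Δ v⟫ := by
    rw [hA v, inner_add_right, inner_smul_right, real_inner_self_eq_norm_sq, hμ]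
    ring
  have hiΔ : |⟪μ, Δ v⟫| ≤ ‖Δ‖ * ‖v‖ := by
    calc |⟪μ, Δ v⟫| ≤ ‖μ‖ * ‖Δ v‖ := abs_real_inner_le_norm μ (Δ v)
    _ ≤ ‖Δ‖ * ‖v‖ := by rw [hμ]; linarith
  have hiΔ1 := abs_le.mp hiΔ
  -- norm bounds
  have htμ : ‖t • μ‖ = t := by
    rw [norm_smul, hμ, mul_one, Real.norm_eq_abs, abs_of_pos (by linarith)]
  have hAvle : ‖A v‖ ≤ t + ‖Δ‖ * ‖v‖ := by
    calc ‖A v‖ = ‖t • μ + Δ v‖ := by rw [hA v]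
    _ ≤ ‖t • μ‖ + ‖Δ v‖ := norm_add_le _ _
    _ ≤ t + ‖Δ‖ * ‖v‖ := by rw [htμ]; linarith
  have hAvge : t - ‖Δ‖ * ‖v‖ ≤ ‖A v‖ := by
    have h1 : ‖t • μ‖ ≤ ‖t • μ + Δ v‖ + ‖Δ v‖ := by
      have := norm_sub_le (t • μ + Δ v) (Δ v)
      simpa using this
    rw [hA v]; rw [htμ] at h1; linarith
  have hAvpos : (0:ℝ) < ‖A v‖ := by linarith
  -- Cauchy-Schwarz: ratio ≤ 1
  have hCS : ⟪μ, A v⟫ ≤ ‖A v‖ := by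
    calc ⟪μ, A v⟫ ≤ ‖μ‖ * ‖A v‖ := real_inner_le_norm μ (A v)
    _ = ‖A v‖ := by rw [hμ, one_mul]
  have hr1 : ⟪μ, A v⟫ / ‖A v‖ ≤ 1 := (div_le_one hAvpos).mpr hCS
  -- lower bound on ratio
  have hnum : t - ‖Δ‖ * ‖v‖ ≤ ⟪μ, A v⟫ := by rw [hinner]; linarith
  have hrlow : (t - ‖Δ‖ * ‖v‖) / (t + ‖Δ‖ * ‖v‖) ≤ ⟪μ, A v⟫ / ‖A v‖ :=
    div_le_div₀ (by linarith) hnum hAvpos hAvle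
  have heq : 1 - (t - ‖Δ‖ * ‖v‖) / (t + ‖Δ‖ * ‖v‖)
      = 2 * (‖Δ‖ * ‖v‖) / (t + ‖Δ‖ * ‖v‖) := by
    have hne : t + ‖Δ‖ * ‖v‖ ≠ 0 := by positivity
    rw [eq_div_iff hne, sub_mul, one_mul, div_mul_cancel₀ _ hne]
    ring
  have h2 : 2 * (‖Δ‖ * ‖v‖) / (t + ‖Δ‖ * ‖v‖) ≤ 4 * ‖Δ‖ * ‖v‖ / (t - ‖Δ‖ * ‖v‖) :=
    div_le_div₀ (by positivity) (by nlinarith) (by linarith) (by linarith)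
  constructor
  · rw [abs_of_nonpos (by linarith)]
    linarith
  · have h3 : 1 - 12 * ‖Δ‖ ≤ (t - ‖Δ‖ * ‖v‖) / (t + ‖Δ‖ * ‖v‖) := by
      rw [le_div_iff₀ (by linarith)]
      nlinarith
    linarith
end

section
/- For a single-layer linear attention model f(Z) = h^T (Z W_q W_k^T Z^T M Z W_v)_{n+1} applied to the prompt Z = [X, y; x^T, 0] ∈ R^{(n+1)×(d+1)} with mask M = diag(I_n, 0), the prediction can be written as f(Z) = x^T W̃ X^T y + x^T(W̄ X^T X h₁ + h (y^T y) w₁), where W̄, w₁, w₂, w are the blocks of W_q W_k^T, (h₁, h) the blocks of W_v h, and W̃ = h W̄ + w₁ h₁^T. In particular, every such prediction with h₁ = w₁ = 0 equals x^T W̃ X^T y, and conversely every map of the form x^T W X^T y (W ∈ R^{d×d}) is realizable. -/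
/-!
The mask deletes the query row, so `M Z (W_v h) = [u; 0]` with `u = X h₁ + h y`, and the readout
only sees the last row `[xᵀ, 0]` of `Z`. Hence the prediction is `xᵀ (W̄ Xᵀ u + (yᵀ u) w₁)`;
expanding `u` and using `yᵀ X h₁ = h₁ᵀ Xᵀ y` gives the stated formula. Choosing `W̄ = W`, `h = 1`
and all other blocks zero realizes `xᵀ W Xᵀ y`.
-/

open Matrix

/-- The prediction of a single-layer linear attention model
`f(Z) = hᵀ (Z W_qW_kᵀ Zᵀ M Z W_v)_{n+1}` on the prompt
`Z = [X, y; xᵀ, 0]` with mask `M = diag(I_n, 0)`, parameterized directly by the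
blocks `W̄, w₁, w₂, w` of `W_qW_kᵀ` and the blocks `(h₁, h)` of `W_v h`. -/
noncomputable def attnPred (n d : ℕ) (X : Matrix (Fin n) (Fin d) ℝ)
    (y : Fin n → ℝ) (x : Fin d → ℝ) (Wb : Matrix (Fin d) (Fin d) ℝ)
    (w1 w2 : Fin d → ℝ) (w : ℝ) (h1 : Fin d → ℝ) (hs : ℝ) : ℝ :=
  let Z : Matrix (Fin n ⊕ Unit) (Fin d ⊕ Unit) ℝ :=
    Matrix.fromBlocks X (Matrix.of fun i _ => y i) (Matrix.of fun _ j => x j) 0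
  let WQK : Matrix (Fin d ⊕ Unit) (Fin d ⊕ Unit) ℝ :=
    Matrix.fromBlocks Wb (Matrix.of fun i _ => w1 i) (Matrix.of fun _ j => w2 j)
      (Matrix.of fun _ _ => w)
  let M : Matrix (Fin n ⊕ Unit) (Fin n ⊕ Unit) ℝ := Matrix.fromBlocks 1 0 0 0
  ((Z * WQK * Zᵀ * M * Z).mulVec (Sum.elim h1 fun _ => hs)) (Sum.inr ())

theorem replicateCol_mulVec_eq_smul {m ι R : Type*} [Fintype ι] [CommSemiring R]
    (y : m → R) (v : ι → R) : replicateCol ι y *ᵥ v = (∑ j, v j) • y := by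
  ext i
  simp [mulVec, dotProduct, Finset.mul_sum, mul_comm]

theorem mulVec_transpose_mulVec_add_dotProduct_smul {R m p : Type*} [CommSemiring R]
    [Fintype m] [Fintype p] (X : Matrix m p R) (y : m → R) (Wb : Matrix p p R)
    (w1 h1 : p → R) (hs : R) :
    Wb *ᵥ (Xᵀ *ᵥ (X *ᵥ h1 + hs • y)) + (y ⬝ᵥ (X *ᵥ h1 + hs • y)) • w1
      = (hs • Wb + vecMulVec w1 h1) *ᵥ (Xᵀ *ᵥ y)
        + ((Wb * (Xᵀ * X)) *ᵥ h1 + (hs * (y ⬝ᵥ y)) • w1) := by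
  have hdot : y ⬝ᵥ X *ᵥ h1 = h1 ⬝ᵥ Xᵀ *ᵥ y := by
    rw [dotProduct_mulVec, mulVec_transpose, dotProduct_comm]
  simp only [mulVec_add, mulVec_smul, add_mulVec, smul_mulVec, vecMulVec_mulVec, op_smul_eq_smul,
    dotProduct_add, dotProduct_smul, smul_eq_mul, add_smul, ← mulVec_mulVec, hdot, mul_smul]
  abel

theorem attnPred_eq_dotProduct (n d : ℕ) (X : Matrix (Fin n) (Fin d) ℝ)
    (y : Fin n → ℝ) (x : Fin d → ℝ) (Wb : Matrix (Fin d) (Fin d) ℝ)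
    (w1 w2 : Fin d → ℝ) (w : ℝ) (h1 : Fin d → ℝ) (hs : ℝ) :
    attnPred n d X y x Wb w1 w2 w h1 hs
      = x ⬝ᵥ (Wb *ᵥ (Xᵀ *ᵥ (X *ᵥ h1 + hs • y)) + (y ⬝ᵥ (X *ᵥ h1 + hs • y)) • w1) := by
  have hcol : ∀ {k : ℕ} (v : Fin k → ℝ), (of fun i (_ : Unit) => v i) = replicateCol Unit v :=
    fun _ => rfl
  have hrow : (of fun (_ : Unit) j => x j) = replicateRow Unit x := rfl
  simp only [attnPred, hcol, hrow, ← mulVec_mulVec, fromBlocks_transpose, fromBlocks_mulVec,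
    transpose_replicateCol, Function.comp_def, Sum.elim_inl, Sum.elim_inr, one_mulVec,
    zero_mulVec, mulVec_zero, add_zero, replicateCol_mulVec_eq_smul,
    replicateRow_mulVec_eq_const, Fintype.sum_unique, Function.const_apply]

theorem attnPred_eq (n d : ℕ) (X : Matrix (Fin n) (Fin d) ℝ) (y : Fin n → ℝ) (x : Fin d → ℝ)
    (Wb : Matrix (Fin d) (Fin d) ℝ) (w1 w2 : Fin d → ℝ) (w : ℝ) (h1 : Fin d → ℝ) (hs : ℝ) :
    attnPred n d X y x Wb w1 w2 w h1 hs
      = x ⬝ᵥ (hs • Wb + vecMulVec w1 h1) *ᵥ (Xᵀ *ᵥ y)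
        + x ⬝ᵥ ((Wb * (Xᵀ * X)) *ᵥ h1 + (hs * (y ⬝ᵥ y)) • w1) := by
  rw [attnPred_eq_dotProduct, mulVec_transpose_mulVec_add_dotProduct_smul, dotProduct_add]

/-- Single-layer linear attention: the prediction equals
`xᵀ W̃ Xᵀ y + xᵀ(W̄ XᵀX h₁ + h (yᵀy) w₁)` where `W̃ = h W̄ + w₁ h₁ᵀ`; in
particular with `h₁ = w₁ = 0` it is `xᵀ W̃ Xᵀ y`, and conversely every map
`x ↦ xᵀ W Xᵀ y` is realizable. -/
theorem stmt19 (n d : ℕ) :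
    (∀ (X : Matrix (Fin n) (Fin d) ℝ) (y : Fin n → ℝ) (x : Fin d → ℝ)
        (Wb : Matrix (Fin d) (Fin d) ℝ) (w1 w2 : Fin d → ℝ) (w : ℝ)
        (h1 : Fin d → ℝ) (hs : ℝ),
      attnPred n d X y x Wb w1 w2 w h1 hs
        = x ⬝ᵥ (hs • Wb + Matrix.vecMulVec w1 h1).mulVec (Xᵀ.mulVec y)
          + x ⬝ᵥ ((Wb * (Xᵀ * X)).mulVec h1 + (hs * (y ⬝ᵥ y)) • w1)) ∧
    (∀ (X : Matrix (Fin n) (Fin d) ℝ) (y : Fin n → ℝ) (x : Fin d → ℝ)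
        (Wb : Matrix (Fin d) (Fin d) ℝ) (w2 : Fin d → ℝ) (w : ℝ) (hs : ℝ),
      attnPred n d X y x Wb 0 w2 w 0 hs
        = x ⬝ᵥ (hs • Wb).mulVec (Xᵀ.mulVec y)) ∧
    (∀ W : Matrix (Fin d) (Fin d) ℝ,
      ∃ (Wb : Matrix (Fin d) (Fin d) ℝ) (w1 w2 : Fin d → ℝ) (w : ℝ)
        (h1 : Fin d → ℝ) (hs : ℝ),
        ∀ (X : Matrix (Fin n) (Fin d) ℝ) (y : Fin n → ℝ) (x : Fin d → ℝ),
          attnPred n d X y x Wb w1 w2 w h1 hs = x ⬝ᵥ W.mulVec (Xᵀ.mulVec y)) := by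
  refine ⟨attnPred_eq n d, fun X y x Wb w2 w hs => ?_, fun W => ⟨W, 0, 0, 0, 0, 1, ?_⟩⟩
  · simp [attnPred_eq]
  · intro X y x
    simp [attnPred_eq]
end
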